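/- Let b ∈ ℝ and let N be a parity-supported refined lattice family satisfying the initial conditions and the asymmetric recursion at every (g,n,L) with 2g−2+n > 1 and L₁+⋯+L_n even. For L₁,L₂ ∈ ℤ_{>0} set s = L₁+L₂, q = L₁²+L₂², π = L₁L₂, and Δ = |L₁−L₂|. Then: if L₁ and L₂ are both even, N_{1,2}(L₁,L₂) = (b²/1536)·(Δ⁴ + 4Δ³(s−2) + 2Δ²(q+2π−6s+6) − 16Δ(s−2) + (s−4)(s−2)(3q+6π+6s−8)) + ((b+1)/768)·(q−8)(q−4); if L₁ and L₂ are both odd, N_{1,2}(L₁,L₂) = (b²/1536)·(Δ⁴ + 4Δ³(s−2) + 2Δ²(q+2π−6s) − 16Δ(s−2) + 12(s−2)² + (s−4)(s−2)(3q+6π+6s−8)) + ((b+1)/768)·(q−10)(q−2). -/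

import Mathlib

open scoped BigOperators

noncomputable section

/-- The ramp function `[x]₊ = max x 0`. -/
def ramp (x : ℝ) : ℝ := max x 0

/-- The kernel `𝓡(L₁, L_m, p)`. -/
def kerR (L1 Lm p : ℝ) : ℝ :=
  (1 / (2 * L1)) * (ramp (L1 + Lm - p) - ramp (-L1 + Lm - p) + ramp (L1 - Lm - p))

/-- The kernel `𝓔(L₁, p)`. -/
def kerE (L1 p : ℝ) : ℝ := (1 / (2 * L1)) * ramp (L1 - p)

/-- The kernel `𝓓(L₁, p, q)`. -/
def kerD (L1 p q : ℝ) : ℝ := (1 / L1) * ramp (L1 - p - q)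

/-- The sublist of entries of `L` whose (0-based) index lies in `S`, in order. -/
def selectIdxs {α : Type*} (L : List α) (S : Finset ℕ) : List α :=
  (L.zipIdx.map Prod.swap).filterMap fun p => if p.1 ∈ S then some p.2 else none

/-- The sublist of entries of `L` whose (0-based) index does not lie in `S`, in order. -/
def removeIdxs {α : Type*} (L : List α) (S : Finset ℕ) : List α :=
  (L.zipIdx.map Prod.swap).filterMap fun p => if p.1 ∈ S then none else some p.2

/-- A refined lattice family is indexed by `h = 2g ∈ ℤ` and a tuple of boundary lengths
(a list); by convention it vanishes when `g < 0` or `2g - 2 + n ≤ 0`. -/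
def ZeroConvention (N : ℤ → List ℤ → ℝ) : Prop :=
  ∀ (h : ℤ) (L : List ℤ), h < 0 ∨ h + (L.length : ℤ) ≤ 2 → N h L = 0

/-- The family vanishes on tuples of positive integers with odd sum. -/
def ParitySupported (N : ℤ → List ℤ → ℝ) : Prop :=
  ∀ (h : ℤ) (L : List ℤ), (∀ x ∈ L, 0 < x) → ¬ Even L.sum → N h L = 0

/-- The initial conditions for `N_{0,3}`, `N_{1/2,2}` and `N_{1,1}` (recall `h = 2g`). -/
def InitialConditions (b : ℝ) (N : ℤ → List ℤ → ℝ) : Prop :=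
  (∀ L1 L2 L3 : ℤ, 0 < L1 → 0 < L2 → 0 < L3 →
    N 0 [L1, L2, L3] = (1 + (-1 : ℝ) ^ (L1 + L2 + L3)) / 2 * (1 / 2)) ∧
  (∀ L1 L2 : ℤ, 0 < L1 → 0 < L2 →
    N 1 [L1, L2] = (1 + (-1 : ℝ) ^ (L1 + L2)) / 2 *
      (b * (((max L1 L2 : ℤ) : ℝ) - 1) / 4)) ∧
  (∀ L1 : ℤ, 0 < L1 →
    N 2 [L1] = (1 + (-1 : ℝ) ^ L1) / 2 *
      (((1 + b) * ((L1 : ℝ) ^ 2 - 4) +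
        b ^ 2 * (5 * (L1 : ℝ) ^ 2 - 12 * (L1 : ℝ) + 4)) / 96))

/-- The asymmetric recursion at `(g, n, L)` with `h = 2g`, `L = L₁ :: T`, `n = 1 + T.length`.
All sums over `p, q ∈ ℤ_{>0}` are finite because the kernels vanish for large `p, q`;
they are written here as sums up to the corresponding vanishing threshold. -/
def AsymRecAt (b : ℝ) (N : ℤ → List ℤ → ℝ) (h : ℤ) (L1 : ℤ) (T : List ℤ) : Prop :=
  N h (L1 :: T) =
    (∑ m ∈ Finset.range T.length, ∑ p ∈ Finset.Icc 1 (L1 + T.getD m 0),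
        (p : ℝ) * kerR (L1 : ℝ) ((T.getD m 0 : ℤ) : ℝ) (p : ℝ) * N h (p :: T.eraseIdx m))
    + b * (∑ p ∈ Finset.Icc 1 L1,
        (p : ℝ) * ((L1 : ℝ) - 1) * kerE (L1 : ℝ) (p : ℝ) * N (h - 1) (p :: T))
    + ∑ p ∈ Finset.Icc 1 L1, ∑ q ∈ Finset.Icc 1 L1,
        (p : ℝ) * (q : ℝ) * kerD (L1 : ℝ) (p : ℝ) (q : ℝ) *
          (((1 + b) / 2) * N (h - 2) (p :: q :: T)
            + ∑ h1 ∈ Finset.Icc 0 h, ∑ S ∈ (Finset.range T.length).powerset,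
                N h1 (p :: selectIdxs T S) * N (h - h1) (q :: removeIdxs T S))

/-- The family satisfies the asymmetric recursion at every `(g, n, L)` with
`2g - 2 + n > 1`, `L ∈ (ℤ_{>0})ⁿ` and `L₁ + ⋯ + L_n` even. -/
def AsymRecursion (b : ℝ) (N : ℤ → List ℤ → ℝ) : Prop :=
  ∀ (h : ℤ) (L1 : ℤ) (T : List ℤ), 0 < L1 → (∀ x ∈ T, 0 < x) →
    3 < h + (1 + (T.length : ℤ)) → Even (L1 + T.sum) → AsymRecAt b N h L1 T

/-- The symmetric recursion at `(g, n, L)` with `h = 2g`. -/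
def SymRecAt (b : ℝ) (N : ℤ → List ℤ → ℝ) (h : ℤ) (L : List ℤ) : Prop :=
  2 * (L.sum : ℝ) * N h L =
    (∑ i ∈ Finset.range L.length, ∑ j ∈ (Finset.range L.length).erase i,
        ∑ p ∈ Finset.Icc 1 (L.getD i 0 + L.getD j 0),
          (p : ℝ) * ramp (((L.getD i 0 : ℤ) : ℝ) + ((L.getD j 0 : ℤ) : ℝ) - (p : ℝ)) *
            N h (p :: removeIdxs L {i, j}))
    + b * (∑ i ∈ Finset.range L.length, ∑ p ∈ Finset.Icc 1 (L.getD i 0),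
        (p : ℝ) * (((L.getD i 0 : ℤ) : ℝ) - 1) *
          ramp (((L.getD i 0 : ℤ) : ℝ) - (p : ℝ)) * N (h - 1) (p :: removeIdxs L {i}))
    + ∑ i ∈ Finset.range L.length, ∑ p ∈ Finset.Icc 1 (L.getD i 0),
        ∑ q ∈ Finset.Icc 1 (L.getD i 0),
          (p : ℝ) * (q : ℝ) * ramp (((L.getD i 0 : ℤ) : ℝ) - (p : ℝ) - (q : ℝ)) *
            ((1 + b) * N (h - 2) (p :: q :: removeIdxs L {i})
              + 2 * ∑ h1 ∈ Finset.Icc 0 h,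
                  ∑ S ∈ ((Finset.range L.length).erase i).powerset,
                    N h1 (p :: selectIdxs L S) *
                      N (h - h1) (q :: selectIdxs L (((Finset.range L.length).erase i) \ S)))

/-! The recursion at `(g, n) = (1, 2)` expresses `N_{1,2}(a, c)` through `N_{1,1}`, `N_{1/2,2}`
and `N_{0,3}`; the products of two factors vanish because one factor is always unstable. After
inserting the initial conditions, each kernel sum becomes a ramp sum `∑_{p ≤ x} (x - p) f p` of
a quasi-polynomial `f` (a polynomial in `p` and `(-1) ^ p`), possibly after the reflection
`p ↦ x - p`; the `𝓓`-term is an iterated ramp sum. Ramp sums of quasi-polynomials are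
quasi-polynomials, and each closed form is certified by its second difference. Adding the closed
forms, separately for `c ≤ a` and `a ≤ c`, gives the formula. -/

open Finset

lemma ramp_of_nonneg {x : ℝ} (h : 0 ≤ x) : ramp x = x := max_eq_left h

lemma ramp_of_nonpos {x : ℝ} (h : x ≤ 0) : ramp x = 0 := max_eq_right h

lemma max_eq_add_ramp_sub (x y : ℝ) : max x y = x + ramp (y - x) := by
  rw [ramp, ← max_add_add_left, add_zero, add_sub_cancel, max_comm]

lemma neg_one_zpow_add_one (x : ℤ) : (-1 : ℝ) ^ (x + 1) = -(-1 : ℝ) ^ x := by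
  rw [zpow_add_one₀ (by norm_num), mul_neg_one]

lemma neg_one_zpow_eq_of_even_sub {m n : ℤ} (h : Even (m - n)) : (-1 : ℝ) ^ m = (-1) ^ n := by
  rw [← sub_add_cancel m n, zpow_add₀ (by norm_num), h.neg_one_zpow, one_mul]

def rampSum (f : ℤ → ℝ) (x : ℤ) : ℝ := ∑ p ∈ Icc 1 x, ((x : ℝ) - p) * f p

lemma rampSum_of_nonpos (f : ℤ → ℝ) {x : ℤ} (hx : x ≤ 0) : rampSum f x = 0 := by
  rw [rampSum, Icc_eq_empty (by omega), sum_empty]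

lemma rampSum_congr {f g : ℤ → ℝ} {x : ℤ} (h : ∀ p ∈ Icc 1 x, f p = g p) :
    rampSum f x = rampSum g x :=
  sum_congr rfl fun p hp => by rw [h p hp]

lemma rampSum_add (f g : ℤ → ℝ) (x : ℤ) :
    rampSum (fun p => f p + g p) x = rampSum f x + rampSum g x := by
  simp only [rampSum, mul_add, sum_add_distrib]

lemma rampSum_sub (f g : ℤ → ℝ) (x : ℤ) :
    rampSum (fun p => f p - g p) x = rampSum f x - rampSum g x := by
  simp only [rampSum, mul_sub, sum_sub_distrib]

lemma rampSum_const_mul (r : ℝ) (f : ℤ → ℝ) (x : ℤ) :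
    rampSum (fun p => r * f p) x = r * rampSum f x := by
  simp only [rampSum, mul_sum]
  exact sum_congr rfl fun p _ => by ring

lemma sum_ramp_sub_mul_eq_rampSum (f : ℤ → ℝ) {x n : ℤ} (hxn : x ≤ n) :
    ∑ p ∈ Icc 1 n, ramp ((x : ℝ) - p) * f p = rampSum f x := by
  symm
  refine sum_subset_zero_on_sdiff (Icc_subset_Icc_right hxn) (fun p hp => ?_) (fun p hp => ?_)
  · obtain ⟨⟨h1, -⟩, hpx⟩ := by simpa using hp
    rw [ramp_of_nonpos (by linarith [(Int.cast_lt (R := ℝ)).2 (hpx h1)]), zero_mul]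
  · obtain ⟨-, hpx⟩ := mem_Icc.1 hp
    rw [ramp_of_nonneg (by linarith [(Int.cast_le (R := ℝ)).2 hpx])]

lemma sum_Icc_one_add_one (f : ℤ → ℝ) {x : ℤ} (hx : 0 ≤ x) :
    ∑ p ∈ Icc 1 (x + 1), f p = ∑ p ∈ Icc 1 x, f p + f (x + 1) := by
  rw [← insert_Icc_right_eq_Icc_add_one (by omega), sum_insert (by simp), add_comm]

lemma rampSum_add_one (f : ℤ → ℝ) {x : ℤ} (hx : 0 ≤ x) :
    rampSum f (x + 1) = rampSum f x + ∑ p ∈ Icc 1 x, f p := by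
  rw [rampSum, sum_Icc_one_add_one _ hx, rampSum, ← sum_add_distrib]
  push_cast
  rw [sub_self, zero_mul, add_zero]
  exact sum_congr rfl fun p _ => by ring

lemma rampSum_add_two (f : ℤ → ℝ) {x : ℤ} (hx : 0 ≤ x) :
    rampSum f (x + 2) = 2 * rampSum f (x + 1) - rampSum f x + f (x + 1) := by
  rw [show x + 2 = x + 1 + 1 by ring, rampSum_add_one f (by omega), rampSum_add_one f hx,
    sum_Icc_one_add_one f hx]
  ring

/-- A closed form `Φ x ((-1) ^ x)` of a ramp sum is certified by its second difference; with the
sign replaced by a free variable `σ`, the hypotheses are polynomial identities. -/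
theorem rampSum_eq_of_second_diff {f : ℤ → ℝ} {φ Φ : ℝ → ℝ → ℝ}
    (hf : ∀ p, 0 < p → f p = φ p ((-1) ^ p)) (h0 : Φ 0 1 = 0) (h1 : Φ 1 (-1) = 0)
    (hΦ : ∀ x σ, Φ (x + 2) σ - 2 * Φ (x + 1) (-σ) + Φ x σ = φ (x + 1) (-σ))
    {x : ℤ} (hx : 0 ≤ x) : rampSum f x = Φ x ((-1) ^ x) := by
  suffices h : rampSum f x = Φ x ((-1) ^ x) ∧
      rampSum f (x + 1) = Φ (x + 1) ((-1) ^ (x + 1)) from h.1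
  induction x, hx using Int.leInduction with
  | base => simp [rampSum, h0, h1]
  | succ x hx ih =>
    refine ⟨by exact_mod_cast ih.2, ?_⟩
    have hσ := hΦ x ((-1) ^ x)
    have hfx := hf (x + 1) (by omega)
    push_cast at hfx ⊢
    rw [neg_one_zpow_add_one] at hfx ih
    rw [neg_one_zpow_add_one, neg_one_zpow_add_one, neg_neg, add_assoc x 1 1, one_add_one_eq_two,
      rampSum_add_two f hx, hfx, ih.1, ih.2, show (x : ℝ) + 1 + 1 = x + 2 by ring]
    linarith

lemma sum_mul_sub_eq_rampSum (g : ℤ → ℝ) (hg : g 0 = 0) {x : ℤ} (hx : 0 ≤ x) :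
    ∑ p ∈ Icc 1 x, (p : ℝ) * g (x - p) = rampSum g x := by
  have extend : ∀ h : ℤ → ℝ, h 0 = 0 → ∑ p ∈ Icc 1 x, h p = ∑ p ∈ Icc 0 x, h p :=
    fun h h0 => by
      rw [← insert_Icc_add_one_left_eq_Icc hx, sum_insert (by simp), h0, zero_add, zero_add]
  rw [rampSum, extend _ (by simp), extend _ (by simp [hg])]
  refine sum_nbij' (x - ·) (x - ·) ?_ ?_ (by simp) (by simp) fun p _ => by push_cast; ring
  all_goals intro p hp; simp only [mem_Icc] at hp ⊢; omega

lemma rampSum_ramp_sub_mul (f : ℤ → ℝ) (a c : ℤ) :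
    rampSum (fun p => ramp ((c : ℝ) - p) * f p) a
      = max a c * rampSum f (min a c) - rampSum (fun p => p * f p) (min a c) := by
  rcases le_total c a with hca | hac
  · calc rampSum (fun p => ramp ((c : ℝ) - p) * f p) a
        = ∑ p ∈ Icc 1 a, ramp ((c : ℝ) - p) * ((a - p) * f p) :=
          sum_congr rfl fun p _ => by ring
      _ = rampSum (fun p => (a - p) * f p) c := sum_ramp_sub_mul_eq_rampSum _ hca
      _ = _ := by
          rw [max_eq_left hca, min_eq_right hca]
          simp only [rampSum, mul_sum, ← sum_sub_distrib]
          exact sum_congr rfl fun p _ => by ring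
  · rw [max_eq_right hac, min_eq_left hac]
    simp only [rampSum, mul_sum, ← sum_sub_distrib]
    refine sum_congr rfl fun p hp => ?_
    rw [ramp_of_nonneg (by linarith [(Int.cast_le (R := ℝ)).2 ((mem_Icc.1 hp).2.trans hac)])]
    ring

/-- `parityWeight 1` and `parityWeight (-1)` are the indicators of even and odd integers. -/
def parityWeight (τ : ℝ) (p : ℤ) : ℝ := (1 + τ * (-1 : ℝ) ^ p) / 2

lemma rampSum_mul_parityWeight (τ : ℝ) {x : ℤ} (hx : 0 ≤ x) :
    rampSum (fun p => p * parityWeight τ p) x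
      = ((x : ℝ) ^ 3 - x) / 12 - τ * (1 + (-1) ^ x) * x / 8 :=
  rampSum_eq_of_second_diff (φ := fun p σ => p * ((1 + τ * σ) / 2))
    (Φ := fun x σ => (x ^ 3 - x) / 12 - τ * (1 + σ) * x / 8)
    (fun _ _ => rfl) (by ring) (by ring) (fun _ _ => by ring) hx

lemma rampSum_sq_mul_parityWeight (τ : ℝ) {x : ℤ} (hx : 0 ≤ x) :
    rampSum (fun p => p ^ 2 * parityWeight τ p) x
      = ((x : ℝ) ^ 4 - x ^ 2) / 24 - τ * ((1 - (-1) ^ x) / 16 + (-1) ^ x * x ^ 2 / 8) :=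
  rampSum_eq_of_second_diff (φ := fun p σ => p ^ 2 * ((1 + τ * σ) / 2))
    (Φ := fun x σ => (x ^ 4 - x ^ 2) / 24 - τ * ((1 - σ) / 16 + σ * x ^ 2 / 8))
    (fun _ _ => rfl) (by ring) (by ring) (fun _ _ => by ring) hx

lemma rampSum_rampSum_mul_parityWeight {x : ℤ} (hx : 0 ≤ x) :
    rampSum (rampSum fun p => p * parityWeight 1 p) x
      = (1 + (-1) ^ x) / 2 * ((x : ℝ) * (x ^ 2 - 4) * (x ^ 2 - 6) / 240)
        + (1 - (-1) ^ x) / 2 * ((x : ℝ) * (x ^ 2 - 1) * (x ^ 2 - 9) / 240) :=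
  rampSum_eq_of_second_diff (φ := fun y σ => (y ^ 3 - y) / 12 - (1 + σ) * y / 8)
    (Φ := fun x σ => (1 + σ) / 2 * (x * (x ^ 2 - 4) * (x ^ 2 - 6) / 240)
        + (1 - σ) / 2 * (x * (x ^ 2 - 1) * (x ^ 2 - 9) / 240))
    (fun _ hp => by rw [rampSum_mul_parityWeight 1 hp.le]; ring) (by ring) (by ring)
    (fun _ _ => by ring) hx

lemma sum_kerR_mul (g : ℤ → ℝ) {a c : ℤ} (ha : 0 ≤ a) (hc : 0 ≤ c) :
    ∑ p ∈ Icc 1 (a + c), kerR a c p * g p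
      = (rampSum g (a + c) - rampSum g (c - a) + rampSum g (a - c)) / (2 * a) := by
  rw [← sum_ramp_sub_mul_eq_rampSum g le_rfl,
    ← sum_ramp_sub_mul_eq_rampSum g (x := c - a) (n := a + c) (by omega),
    ← sum_ramp_sub_mul_eq_rampSum g (x := a - c) (n := a + c) (by omega), ← sum_sub_distrib,
    ← sum_add_distrib, sum_div]
  refine sum_congr rfl fun p _ => ?_
  rw [kerR, show -(a : ℝ) + c - p = ((c - a : ℤ) : ℝ) - p by push_cast; ring,
    show (a : ℝ) - c - p = ((a - c : ℤ) : ℝ) - p by push_cast; ring]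
  push_cast
  ring

lemma sum_kerE_mul (g : ℤ → ℝ) (a : ℤ) :
    ∑ p ∈ Icc 1 a, kerE a p * g p = rampSum g a / (2 * a) := by
  rw [← sum_ramp_sub_mul_eq_rampSum g le_rfl, sum_div]
  exact sum_congr rfl fun p _ => by rw [kerE]; ring

lemma sum_sum_kerD_mul (w : ℤ → ℝ) {a : ℤ} (ha : 0 ≤ a) :
    ∑ p ∈ Icc 1 a, ∑ q ∈ Icc 1 a, (p : ℝ) * q * kerD a p q * w (a - p - q)
      = rampSum (rampSum fun k => k * w k) a / a := by
  have inner : ∀ p ∈ Icc 1 a, ∑ q ∈ Icc 1 a, (p : ℝ) * q * kerD a p q * w (a - p - q)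
      = p * rampSum (fun k => k * w k) (a - p) / a := fun p hp => by
    obtain ⟨hp1, hpa⟩ := mem_Icc.1 hp
    calc ∑ q ∈ Icc 1 a, (p : ℝ) * q * kerD a p q * w (a - p - q)
        = p / a * ∑ q ∈ Icc 1 a, ramp (((a - p : ℤ) : ℝ) - q) * (q * w (a - p - q)) := by
          rw [mul_sum]
          refine sum_congr rfl fun q _ => ?_
          rw [kerD]
          push_cast
          ring
      _ = p / a * rampSum (fun q => q * w (a - p - q)) (a - p) := by
          rw [sum_ramp_sub_mul_eq_rampSum _ (by omega)]
      _ = p * rampSum (fun k => k * w k) (a - p) / a := by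
          rw [← sum_mul_sub_eq_rampSum (fun k => k * w k) (by simp) (by omega), rampSum,
            mul_div_right_comm]
          congr 1
          refine sum_congr rfl fun q _ => ?_
          push_cast
          ring
  rw [sum_congr rfl inner, ← sum_div, sum_mul_sub_eq_rampSum _ (rampSum_of_nonpos _ le_rfl) ha]

section Family

variable {b : ℝ} {N : ℤ → List ℤ → ℝ}

lemma N_two_pair_eq_of_asymRecursion (hzero : ZeroConvention N) (hrec : AsymRecursion b N)
    {a c : ℤ} (ha : 0 < a) (hc : 0 < c) (hac : Even (a + c)) :
    N 2 [a, c] =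
      ∑ p ∈ Icc 1 (a + c), (p : ℝ) * kerR a c p * N 2 [p]
      + b * ∑ p ∈ Icc 1 a, (p : ℝ) * (a - 1) * kerE a p * N 1 [p, c]
      + ∑ p ∈ Icc 1 a, ∑ q ∈ Icc 1 a,
          (p : ℝ) * q * kerD a p q * ((1 + b) / 2 * N 0 [p, q, c]) := by
  have h := hrec 2 a [c] ha (by simpa using hc) (by norm_num) (by simpa using hac)
  norm_num [AsymRecAt] at h
  rw [h]
  have unstable : ∀ p q : ℤ, ∑ h1 ∈ Icc (0 : ℤ) 2, ∑ S ∈ ({0} : Finset ℕ).powerset,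
      N h1 (p :: selectIdxs [c] S) * N (2 - h1) (q :: removeIdxs [c] S) = 0 := by
    intro p q
    refine sum_eq_zero fun h1 _ => sum_eq_zero fun S hS => ?_
    have hlen : ((p :: selectIdxs [c] S).length : ℤ) + (q :: removeIdxs [c] S).length = 3 := by
      rw [mem_powerset, subset_singleton_iff] at hS
      rcases hS with rfl | rfl <;> simp [selectIdxs, removeIdxs]
    by_cases hunstable : h1 + ((p :: selectIdxs [c] S).length : ℤ) ≤ 2
    · rw [hzero _ _ (Or.inr hunstable), zero_mul]
    · rw [hzero (2 - h1) _ (Or.inr (by omega)), mul_zero]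
  simp only [unstable, add_zero]

lemma N_two_pair_eq_rampSum (hzero : ZeroConvention N) (hinit : InitialConditions b N)
    (hrec : AsymRecursion b N) {a c : ℤ} (ha : 0 < a) (hc : 0 < c) (hac : Even (a + c)) :
    N 2 [a, c] =
      (rampSum (fun p => p * N 2 [p]) (a + c) - rampSum (fun p => p * N 2 [p]) (c - a)
        + rampSum (fun p => p * N 2 [p]) (a - c)) / (2 * a)
      + b * (a - 1) / (2 * a) * rampSum (fun p => p * N 1 [p, c]) a
      + (1 + b) / (4 * a) * rampSum (rampSum fun k => k * parityWeight 1 k) a := by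
  have hR : ∑ p ∈ Icc 1 (a + c), (p : ℝ) * kerR a c p * N 2 [p]
      = (rampSum (fun p => p * N 2 [p]) (a + c) - rampSum (fun p => p * N 2 [p]) (c - a)
        + rampSum (fun p => p * N 2 [p]) (a - c)) / (2 * a) := by
    rw [← sum_kerR_mul _ ha.le hc.le]
    exact sum_congr rfl fun p _ => by ring
  have hE : b * ∑ p ∈ Icc 1 a, (p : ℝ) * (a - 1) * kerE a p * N 1 [p, c]
      = b * (a - 1) / (2 * a) * rampSum (fun p => p * N 1 [p, c]) a := by
    rw [show b * (a - 1) / (2 * a) * rampSum (fun p => p * N 1 [p, c]) a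
        = b * ((a - 1) * (rampSum (fun p => p * N 1 [p, c]) a / (2 * a))) by ring,
      ← sum_kerE_mul, mul_sum, mul_sum, mul_sum]
    exact sum_congr rfl fun p _ => by ring
  have hD : ∑ p ∈ Icc 1 a, ∑ q ∈ Icc 1 a,
        (p : ℝ) * q * kerD a p q * ((1 + b) / 2 * N 0 [p, q, c])
      = (1 + b) / (4 * a) * rampSum (rampSum fun k => k * parityWeight 1 k) a := by
    rw [show (1 + b) / (4 * a) * rampSum (rampSum fun k => k * parityWeight 1 k) a
        = (1 + b) / 4 * (rampSum (rampSum fun k => k * parityWeight 1 k) a / a) by ring,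
      ← sum_sum_kerD_mul _ ha.le, mul_sum]
    refine sum_congr rfl fun p hp => ?_
    rw [mul_sum]
    refine sum_congr rfl fun q hq => ?_
    rw [hinit.1 p q c (mem_Icc.1 hp).1 (mem_Icc.1 hq).1 hc, parityWeight,
      neg_one_zpow_eq_of_even_sub (m := p + q + c) (n := a - p - q) (by
        rw [show p + q + c - (a - p - q) = (a + c) + 2 * (p + q - a) by ring]
        exact hac.add (even_two_mul _))]
    ring
  rw [N_two_pair_eq_of_asymRecursion hzero hrec ha hc hac, hR, hE, hD]

lemma rampSum_mul_N_one_one (hinit : InitialConditions b N) {x : ℤ} (hx : 0 ≤ x) :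
    rampSum (fun p => p * N 2 [p]) x
      = (1 + (-1) ^ x) / 2 * ((1 + b) * x * (x ^ 2 - 4) * (x ^ 2 - 16) / 3840
          + b ^ 2 * x ^ 2 * (x - 4) * (x ^ 2 - 4) / 768)
        + (1 - (-1) ^ x) / 2 * ((1 + b) * x * (x ^ 2 - 1) * (x ^ 2 - 9) / 3840
          + b ^ 2 * (x ^ 2 - 1) * (x - 3) * (x ^ 2 - x + 4) / 768) :=
  rampSum_eq_of_second_diff
    (φ := fun p σ =>
      p * ((1 + σ) / 2 * (((1 + b) * (p ^ 2 - 4) + b ^ 2 * (5 * p ^ 2 - 12 * p + 4)) / 96)))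
    (Φ := fun x σ => (1 + σ) / 2 * ((1 + b) * x * (x ^ 2 - 4) * (x ^ 2 - 16) / 3840
          + b ^ 2 * x ^ 2 * (x - 4) * (x ^ 2 - 4) / 768)
        + (1 - σ) / 2 * ((1 + b) * x * (x ^ 2 - 1) * (x ^ 2 - 9) / 3840
          + b ^ 2 * (x ^ 2 - 1) * (x - 3) * (x ^ 2 - x + 4) / 768))
    (fun p hp => by rw [hinit.2.2 p hp]) (by ring) (by ring) (fun _ _ => by ring) hx

lemma rampSum_mul_N_half_two (hinit : InitialConditions b N) {a c : ℤ} (hc : 0 < c) :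
    rampSum (fun p => p * N 1 [p, c]) a
      = b / 4 * (rampSum (fun p => p ^ 2 * parityWeight ((-1) ^ c) p) a
          - rampSum (fun p => p * parityWeight ((-1) ^ c) p) a
          + max a c * rampSum (fun p => p * parityWeight ((-1) ^ c) p) (min a c)
          - rampSum (fun p => p ^ 2 * parityWeight ((-1) ^ c) p) (min a c)) := by
  set w := parityWeight ((-1) ^ c)
  have split : ∀ p ∈ Icc 1 a, p * N 1 [p, c]
      = b / 4 * ((p ^ 2 * w p - p * w p) + ramp ((c : ℝ) - p) * (p * w p)) := fun p hp => by
    rw [hinit.2.1 p c (mem_Icc.1 hp).1 hc, Int.cast_max, max_eq_add_ramp_sub,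
      zpow_add₀ (by norm_num)]
    simp only [w, parityWeight]
    ring
  rw [rampSum_congr split, rampSum_const_mul, rampSum_add, rampSum_sub, rampSum_ramp_sub_mul]
  simp only [← mul_assoc, ← pow_two]
  ring

lemma N_two_pair_eq (hzero : ZeroConvention N) (hinit : InitialConditions b N)
    (hrec : AsymRecursion b N) {a c : ℤ} (ha : 0 < a) (hc : 0 < c) (hac : Even (a + c)) :
    let σ : ℝ := (-1) ^ a
    let s : ℝ := a + c
    let q : ℝ := a ^ 2 + c ^ 2
    let π : ℝ := a * c
    let Δ : ℝ := |(a : ℝ) - c|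
    N 2 [a, c] =
      (1 + σ) / 2 *
        (b ^ 2 / 1536 *
          (Δ ^ 4 + 4 * Δ ^ 3 * (s - 2) + 2 * Δ ^ 2 * (q + 2 * π - 6 * s + 6) - 16 * Δ * (s - 2)
            + (s - 4) * (s - 2) * (3 * q + 6 * π + 6 * s - 8))
          + (b + 1) / 768 * (q - 8) * (q - 4))
      + (1 - σ) / 2 *
        (b ^ 2 / 1536 *
          (Δ ^ 4 + 4 * Δ ^ 3 * (s - 2) + 2 * Δ ^ 2 * (q + 2 * π - 6 * s) - 16 * Δ * (s - 2)
            + 12 * (s - 2) ^ 2 + (s - 4) * (s - 2) * (3 * q + 6 * π + 6 * s - 8))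
          + (b + 1) / 768 * (q - 10) * (q - 2)) := by
  intro σ s q π Δ
  have hsub : Even (a - c) := by simpa [two_mul, ← sub_sub] using hac.sub (even_two_mul c)
  have hσc : (-1 : ℝ) ^ c = (-1) ^ a := neg_one_zpow_eq_of_even_sub (by simpa using hsub.neg)
  have hσ : (-1 : ℝ) ^ a = 1 ∨ (-1 : ℝ) ^ a = -1 :=
    (Int.even_or_odd a).imp Even.neg_one_zpow Odd.neg_one_zpow
  rw [N_two_pair_eq_rampSum hzero hinit hrec ha hc hac, rampSum_mul_N_half_two hinit hc,
    rampSum_mul_N_one_one hinit (by omega : (0 : ℤ) ≤ a + c),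
    rampSum_sq_mul_parityWeight _ ha.le, rampSum_mul_parityWeight _ ha.le,
    rampSum_rampSum_mul_parityWeight ha.le, hac.neg_one_zpow, hσc]
  rcases le_total c a with h | h
  · rw [rampSum_of_nonpos _ (by omega : c - a ≤ 0),
      rampSum_mul_N_one_one hinit (by omega : 0 ≤ a - c), min_eq_right h, max_eq_left h,
      rampSum_sq_mul_parityWeight _ hc.le, rampSum_mul_parityWeight _ hc.le, hsub.neg_one_zpow,
      hσc]
    simp only [σ, Δ, s, q, π, abs_of_nonneg (sub_nonneg.2 (Int.cast_le.2 h))]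
    push_cast
    rcases hσ with hσ | hσ <;> rw [hσ] <;> field_simp <;> ring
  · rw [rampSum_of_nonpos _ (by omega : a - c ≤ 0),
      rampSum_mul_N_one_one hinit (by omega : 0 ≤ c - a), min_eq_left h, max_eq_right h,
      rampSum_sq_mul_parityWeight _ ha.le, rampSum_mul_parityWeight _ ha.le,
      (by simpa using hsub.neg : Even (c - a)).neg_one_zpow]
    simp only [σ, Δ, s, q, π, abs_of_nonpos (sub_nonpos.2 (Int.cast_le.2 h))]
    push_cast
    rcases hσ with hσ | hσ <;> rw [hσ] <;> field_simp <;> ring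

end Family

theorem N_one_two_general (b : ℝ) (N : ℤ → List ℤ → ℝ)
    (hzero : ZeroConvention N)
    (hinit : InitialConditions b N) (hrec : AsymRecursion b N) :
    ∀ L1 L2 : ℤ, 0 < L1 → 0 < L2 →
      let s : ℝ := (L1 : ℝ) + (L2 : ℝ)
      let q : ℝ := (L1 : ℝ) ^ 2 + (L2 : ℝ) ^ 2
      let π : ℝ := (L1 : ℝ) * (L2 : ℝ)
      let Δ : ℝ := |(L1 : ℝ) - (L2 : ℝ)|
      ((Even L1 ∧ Even L2 →
          N 2 [L1, L2] =
            b ^ 2 / 1536 *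
              (Δ ^ 4 + 4 * Δ ^ 3 * (s - 2) + 2 * Δ ^ 2 * (q + 2 * π - 6 * s + 6)
                - 16 * Δ * (s - 2)
                + (s - 4) * (s - 2) * (3 * q + 6 * π + 6 * s - 8))
            + (b + 1) / 768 * (q - 8) * (q - 4)) ∧
       (Odd L1 ∧ Odd L2 →
          N 2 [L1, L2] =
            b ^ 2 / 1536 *
              (Δ ^ 4 + 4 * Δ ^ 3 * (s - 2) + 2 * Δ ^ 2 * (q + 2 * π - 6 * s)
                - 16 * Δ * (s - 2) + 12 * (s - 2) ^ 2
                + (s - 4) * (s - 2) * (3 * q + 6 * π + 6 * s - 8))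
            + (b + 1) / 768 * (q - 10) * (q - 2))) := by
  intro a c ha hc s q π Δ
  refine ⟨fun ⟨ea, ec⟩ => ?_, fun ⟨oa, oc⟩ => ?_⟩
  · rw [N_two_pair_eq hzero hinit hrec ha hc (ea.add ec), ea.neg_one_zpow]
    ring
  · rw [N_two_pair_eq hzero hinit hrec ha hc (oa.add_odd oc), oa.neg_one_zpow]
    ring

/-- The value of `N_{1,2}` (recall `h = 2g`, so `h = 2`), in terms of
`s = L₁+L₂`, `q = L₁²+L₂²`, `π = L₁L₂` and `Δ = |L₁-L₂|`, in the two parity cases. -/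
theorem N_one_two (b : ℝ) (N : ℤ → List ℤ → ℝ)
    (hzero : ZeroConvention N) (hpar : ParitySupported N)
    (hinit : InitialConditions b N) (hrec : AsymRecursion b N) :
    ∀ L1 L2 : ℤ, 0 < L1 → 0 < L2 →
      let s : ℝ := (L1 : ℝ) + (L2 : ℝ)
      let q : ℝ := (L1 : ℝ) ^ 2 + (L2 : ℝ) ^ 2
      let π : ℝ := (L1 : ℝ) * (L2 : ℝ)
      let Δ : ℝ := |(L1 : ℝ) - (L2 : ℝ)|
      ((Even L1 ∧ Even L2 →
          N 2 [L1, L2] =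
            b ^ 2 / 1536 *
              (Δ ^ 4 + 4 * Δ ^ 3 * (s - 2) + 2 * Δ ^ 2 * (q + 2 * π - 6 * s + 6)
                - 16 * Δ * (s - 2)
                + (s - 4) * (s - 2) * (3 * q + 6 * π + 6 * s - 8))
            + (b + 1) / 768 * (q - 8) * (q - 4)) ∧
       (Odd L1 ∧ Odd L2 →
          N 2 [L1, L2] =
            b ^ 2 / 1536 *
              (Δ ^ 4 + 4 * Δ ^ 3 * (s - 2) + 2 * Δ ^ 2 * (q + 2 * π - 6 * s)
                - 16 * Δ * (s - 2) + 12 * (s - 2) ^ 2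
                + (s - 4) * (s - 2) * (3 * q + 6 * π + 6 * s - 8))
            + (b + 1) / 768 * (q - 10) * (q - 2))) :=
  N_one_two_general b N hzero hinit hrec
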